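/- arXiv:1211.3322 — 3 statements merged into one kernel-verified Lean document; each statement's English description precedes it below -/
import Mathlib

section
/- Let A ∈ ℂ^{N×M} with N ≤ M. For k = 1,…,M, let I_k = {(k+i mod M)+1 : i ∈ [0, N−1]} be a cyclic sliding window of size N on {1,…,M}, and let A_{I_k} be the N×N submatrix of A with columns indexed by I_k. If rank(A_{I_k}) = N for some k ∈ [1,M], then ∑_{k=1}^{M} rank(A_{I_k}) ≥ N². -/
/-!
The columns of `A` in a full-rank window `I_{k₀}` are linearly independent, so any window `I_k`
has rank at least `|I_{k₀} ∩ I_k|`. Every column index lies in exactly `N` windows, so double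
counting gives `∑_k |I_{k₀} ∩ I_k| = N · |I_{k₀}| = N²`.
-/

/-- The cyclic sliding window of size `N` on `{0,…,M-1}`: `win k i = (k + i) mod M`. -/
def win {M N : ℕ} (k : Fin M) (i : Fin N) : Fin M :=
  ⟨((k : ℕ) + (i : ℕ)) % M, Nat.mod_lt _ k.pos⟩

open Matrix Submodule Module Finset

theorem LinearIndepOn.card_inter_le_finrank_span {K V ι : Type*} [DivisionRing K]
    [AddCommGroup V] [Module K V] [DecidableEq ι] {v : ι → V} {s : Finset ι}
    (hs : LinearIndepOn K v s) (t : Finset ι) :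
    #(s ∩ t) ≤ finrank K (span K (v '' t)) := by
  have hst : LinearIndepOn K v (s ∩ t : Finset ι) := hs.mono (by simp)
  have : FiniteDimensional K (span K (v '' t)) :=
    FiniteDimensional.span_of_finite K (t.finite_toSet.image v)
  calc #(s ∩ t) = finrank K (span K (v '' (s ∩ t : Finset ι))) := by
        rw [Set.image_eq_range, finrank_span_eq_card hst]; exact (Fintype.card_coe _).symm
    _ ≤ finrank K (span K (v '' t)) :=
        Submodule.finrank_mono (span_mono (Set.image_mono (by simp)))

namespace Matrix

variable {K m n ι ι' : Type*} [Field K] [Fintype ι] [Fintype ι']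

theorem rank_submatrix_id_eq_finrank_span (A : Matrix m n K) (f : ι → n) :
    (A.submatrix id f).rank = finrank K (span K (A.col '' Set.range f)) := by
  rw [rank_eq_finrank_span_cols, ← Set.range_comp]
  rfl

theorem linearIndepOn_col_of_rank_submatrix_eq_card {A : Matrix m n K} {f : ι → n}
    (hA : (A.submatrix id f).rank = Fintype.card ι) :
    LinearIndepOn K A.col (Set.range f) := by
  have h : LinearIndependent K (A.col ∘ f) := by
    rw [linearIndependent_iff_card_eq_finrank_span, ← hA, rank_eq_finrank_span_cols]
    rfl
  exact (linearIndepOn_range_iff h.injective.of_comp _).2 h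

theorem card_inter_le_rank_submatrix [DecidableEq n] {A : Matrix m n K} {f : ι → n}
    (hA : (A.submatrix id f).rank = Fintype.card ι) (g : ι' → n) :
    #(univ.image f ∩ univ.image g) ≤ (A.submatrix id g).rank := by
  have hf := linearIndepOn_col_of_rank_submatrix_eq_card hA
  rw [← Set.image_univ, ← coe_univ, ← coe_image] at hf
  rw [rank_submatrix_id_eq_finrank_span, ← Set.image_univ, ← coe_univ, ← coe_image]
  exact hf.card_inter_le_finrank_span _

end Matrix

theorem Finset.sum_card_inter_eq_card_mul {α κ : Type*} [DecidableEq α] [Fintype κ]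
    {W : κ → Finset α} {s : Finset α} {n : ℕ} (hW : ∀ a ∈ s, #{k | a ∈ W k} = n) :
    ∑ k, #(s ∩ W k) = #s * n := by
  calc ∑ k, #(s ∩ W k) = ∑ a ∈ s, #{k | a ∈ W k} := by
        simp_rw [← filter_mem_eq_inter]
        exact sum_card_bipartiteAbove_eq_sum_card_bipartiteBelow (r := fun k a => a ∈ W k)
    _ = #s * n := by rw [sum_congr rfl hW, sum_const, smul_eq_mul]

def window {M : ℕ} (N : ℕ) (k : Fin M) : Finset (Fin M) := univ.image (win (N := N) k)

section Window

variable {M N : ℕ}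

theorem win_eq_add_castLE (hNM : N ≤ M) (k : Fin M) (i : Fin N) :
    win k i = k + Fin.castLE hNM i :=
  Fin.ext (by simp [win, Fin.val_add])

theorem win_injective (hNM : N ≤ M) (k : Fin M) : Function.Injective (win (N := N) k) :=
  fun i i' h => by
    rw [win_eq_add_castLE hNM, win_eq_add_castLE hNM] at h
    exact Fin.castLE_injective hNM (add_left_cancel h)

theorem card_window (hNM : N ≤ M) (k : Fin M) : #(window N k) = N := by
  rw [window, card_image_of_injective _ (win_injective hNM k), card_univ, Fintype.card_fin]

theorem card_filter_mem_window (hNM : N ≤ M) (j : Fin M) : #{k | j ∈ window N k} = N := by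
  have : NeZero M := ⟨j.pos.ne'⟩
  have hstarts : ({k | j ∈ window N k} : Finset (Fin M)) =
      univ.image (fun i => j - Fin.castLE hNM i) := by
    ext k
    simp only [window, mem_filter, mem_univ, true_and, mem_image, win_eq_add_castLE hNM]
    exact exists_congr fun i => by rw [sub_eq_iff_eq_add, eq_comm]
  have hinj : Function.Injective fun i => j - Fin.castLE hNM i :=
    fun i i' h => Fin.castLE_injective hNM (sub_right_injective h)
  rw [hstarts, card_image_of_injective _ hinj, card_univ, Fintype.card_fin]

theorem sum_card_inter_window (hNM : N ≤ M) (s : Finset (Fin M)) :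
    ∑ k, #(s ∩ window N k) = #s * N :=
  sum_card_inter_eq_card_mul fun j _ => card_filter_mem_window hNM j

end Window

/-- If some cyclic window submatrix of size `N × N` of the `N × M` matrix `A`
(`N ≤ M`) has full rank `N`, then the ranks of all `M` window submatrices sum
to at least `N²`. -/
theorem sum_window_ranks_ge (N M : ℕ) (hNM : N ≤ M) (A : Matrix (Fin N) (Fin M) ℂ)
    (h : ∃ k : Fin M, (A.submatrix id (win (N:=N) k)).rank = N) :
    N ^ 2 ≤ ∑ k : Fin M, (A.submatrix id (win (N:=N) k)).rank := by
  obtain ⟨k₀, hk₀⟩ := h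
  calc N ^ 2 = ∑ k, #(window N k₀ ∩ window N k) := by
        rw [sum_card_inter_window hNM, card_window hNM, sq]
    _ ≤ ∑ k, (A.submatrix id (win k)).rank := sum_le_sum fun k _ =>
        card_inter_le_rank_submatrix (hk₀.trans (Fintype.card_fin N).symm) (win k)
end

section
/- Let S ∈ ℂ^{N×M} with singular value decomposition S = U Σ V_S^H where V_S ∈ ℂ^{M×N} has orthonormal columns, and let K ⪰ 0 be M×M. Then det(I + S K S^H) = det(I + Σ² V_S^H K V_S) ≤ ∏_{i=1}^{N} (1 + ‖S‖_F² λ_i(K)), where λ_1(K) ≥ … ≥ λ_N(K) are the N largest eigenvalues of K. -/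
/-!
Sylvester's identity `det (1 + X * Y) = det (1 + Y * X)` together with `Uᴴ * U = 1` turns
`det (1 + S K Sᴴ)` into `det (1 + Σ² Vᴴ K V)`. As `Σ² ≤ ‖S‖_F² • 1`, monotonicity of
`det (1 + ·)` in the Loewner order bounds this by `det (1 + ‖S‖_F² • Vᴴ K V)`. Writing
`K = W Λ Wᴴ`, the latter is `det (A (1 + ‖S‖_F² Λ) Aᴴ)` with `A = Vᴴ W` having orthonormal rows,
and the Cauchy–Binet formula exhibits it as a convex combination of products of `N` of the numbers
`1 + ‖S‖_F² λⱼ`; each such product is at most the product over the `N` largest `λⱼ`.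
-/

open Matrix Equiv Function
open scoped ComplexOrder

namespace Fin

variable {n m : ℕ}

theorem eq_and_eq_of_strictMono_comp_perm_eq {g₁ g₂ : Fin n → Fin m} {τ₁ τ₂ : Perm (Fin n)}
    (h₁ : StrictMono g₁) (h₂ : StrictMono g₂) (h : g₁ ∘ τ₁ = g₂ ∘ τ₂) : g₁ = g₂ ∧ τ₁ = τ₂ := by
  have hg : g₁ = g₂ := by
    refine (h₁.range_inj h₂).mp ?_
    rw [← τ₁.surjective.range_comp g₁, h, τ₂.surjective.range_comp]
  subst hg
  exact ⟨rfl, Equiv.ext fun i => h₁.injective (congrFun h i)⟩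

open Classical in
theorem sum_injective_eq_sum_strictMono_sum_perm {β : Type*} [AddCommMonoid β]
    (f : (Fin n → Fin m) → β) :
    ∑ p with Injective p, f p = ∑ g with StrictMono g, ∑ τ : Perm (Fin n), f (g ∘ τ) := by
  rw [← Finset.sum_product']
  refine Finset.sum_nbij' (fun p => (p ∘ Tuple.sort p, (Tuple.sort p)⁻¹)) (fun x => x.1 ∘ x.2)
    ?_ ?_ ?_ ?_ (fun p _ => by simp [comp_assoc])
  · intro p hp
    simp only [Finset.mem_filter, Finset.mem_univ, true_and] at hp ⊢
    simpa using (Tuple.monotone_sort p).strictMono_of_injective (hp.comp (Tuple.sort p).injective)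
  · rintro ⟨g, τ⟩ h
    simp only [Finset.mem_product, Finset.mem_filter, Finset.mem_univ, true_and, and_true] at h ⊢
    exact h.injective.comp τ.injective
  · intro p _
    simp [comp_assoc]
  · rintro ⟨g, τ⟩ h
    simp only [Finset.mem_product, Finset.mem_filter, Finset.mem_univ, true_and, and_true] at h
    have hinj := h.injective.comp τ.injective
    obtain ⟨hg, hτ⟩ := eq_and_eq_of_strictMono_comp_perm_eq
      ((Tuple.monotone_sort _).strictMono_of_injective (hinj.comp (Tuple.sort _).injective)) h
      (show (g ∘ τ ∘ Tuple.sort (g ∘ τ)) ∘ ⇑(Tuple.sort (g ∘ τ))⁻¹ = g ∘ τ by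
        simp [comp_assoc])
    exact Prod.ext hg hτ

theorem val_le_val_of_strictMono {g : Fin n → Fin m} (hg : StrictMono g) (i : Fin n) :
    (i : ℕ) ≤ g i := by
  obtain ⟨k, hk⟩ := i
  induction k with
  | zero => exact Nat.zero_le _
  | succ k ih =>
    have h_lt : g ⟨k, by omega⟩ < g ⟨k + 1, hk⟩ := hg (Fin.mk_lt_mk.mpr k.lt_succ_self)
    exact (ih (by omega)).trans_lt h_lt

-- Sorting the image of `p` gives a strictly monotone enumeration, whose `i`-th term is `≥ i`.
theorem prod_comp_le_prod_castLE {R : Type*} [CommSemiring R] [PartialOrder R] [IsOrderedRing R]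
    {f : Fin m → R} (hf : Antitone f) (hf₀ : ∀ j, 0 ≤ f j) {p : Fin n → Fin m}
    (hp : Injective p) (h : n ≤ m) : ∏ i, f (p i) ≤ ∏ i, f (castLE h i) := by
  classical
  set T := Finset.univ.image p
  have hT : T.card = n := by simp [T, Finset.card_image_of_injective _ hp]
  have h_sort : ∏ i, f (p i) = ∏ i, f (T.orderEmbOfFin hT i) := by
    rw [← Finset.prod_image (f := f) hp.injOn, ← Finset.prod_image (f := f)
      (T.orderEmbOfFin hT).injective.injOn, Finset.image_orderEmbOfFin_univ]
  rw [h_sort]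
  refine Finset.prod_le_prod (fun i _ => hf₀ _) fun i _ => hf ?_
  exact Fin.le_def.mpr (val_le_val_of_strictMono (T.orderEmbOfFin hT).strictMono i)

end Fin

namespace Matrix

section CommRing

variable {R : Type*} [CommRing R]

theorem det_mul_eq_sum_det_submatrix_mul_prod {l m : Type*} [Fintype l] [DecidableEq l]
    [Fintype m] [DecidableEq m] (M : Matrix l m R) (N : Matrix m l R) :
    det (M * N) = ∑ p : l → m, det (M.submatrix id p) * ∏ i, N (p i) i := by
  simp_rw [det_apply' (M * N), mul_apply, Finset.prod_univ_sum, Fintype.piFinset_univ,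
    Finset.mul_sum, det_apply', Finset.sum_mul, submatrix_apply, id, Finset.prod_mul_distrib]
  rw [Finset.sum_comm]
  simp_rw [mul_assoc]

open Classical in
/-- The Cauchy–Binet formula. -/
theorem det_mul_eq_sum_strictMono {n m : ℕ} (M : Matrix (Fin n) (Fin m) R)
    (N : Matrix (Fin m) (Fin n) R) :
    det (M * N) = ∑ g : Fin n → Fin m with StrictMono g,
      det (M.submatrix id g) * det (N.submatrix g id) := by
  have h_noninj : ∀ p : Fin n → Fin m, ¬Injective p → det (M.submatrix id p) = 0 := by
    intro p hp
    obtain ⟨i, j, hpij, hij⟩ : ∃ i j, p i = p j ∧ i ≠ j := by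
      simpa [Injective] using hp
    exact det_zero_of_column_eq hij fun k => by simp [hpij]
  rw [det_mul_eq_sum_det_submatrix_mul_prod, ← Finset.sum_filter_of_ne fun p _ h =>
      not_not.mp (mt (h_noninj p) (left_ne_zero_of_mul h)),
    Fin.sum_injective_eq_sum_strictMono_sum_perm]
  refine Finset.sum_congr rfl fun g _ => ?_
  have h_perm (τ : Perm (Fin n)) : M.submatrix id (g ∘ τ) = (M.submatrix id g).submatrix id τ :=
    rfl
  simp_rw [h_perm, det_permute']
  rw [det_apply' (N.submatrix g id), Finset.mul_sum]
  refine Finset.sum_congr rfl fun τ _ => ?_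
  rw [mul_right_comm, mul_comm]
  rfl

variable [StarRing R]

open Classical in
theorem det_mul_diagonal_mul_conjTranspose {n m : ℕ} (A : Matrix (Fin n) (Fin m) R)
    (d : Fin m → R) :
    det (A * diagonal d * Aᴴ) = ∑ g : Fin n → Fin m with StrictMono g,
      (∏ i, d (g i)) * (det (A.submatrix id g) * star (det (A.submatrix id g))) := by
  refine (det_mul_eq_sum_strictMono _ _).trans (Finset.sum_congr rfl fun g _ => ?_)
  have h_left : (A * diagonal d).submatrix id g = A.submatrix id g * diagonal fun i => d (g i) := by
    ext i j
    simp [mul_diagonal]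
  rw [h_left, ← conjTranspose_submatrix, det_mul, det_diagonal, det_conjTranspose]
  ring

-- The weights `det A_g * star (det A_g)` are nonnegative and, by Cauchy–Binet for `A * Aᴴ = 1`,
-- sum to one.
theorem det_mul_diagonal_mul_conjTranspose_le [PartialOrder R] [StarOrderedRing R]
    [IsOrderedRing R] {n m : ℕ} {A : Matrix (Fin n) (Fin m) R} (hA : A * Aᴴ = 1)
    (d : Fin m → R) {c : R} (hc : ∀ g : Fin n → Fin m, StrictMono g → ∏ i, d (g i) ≤ c) :
    det (A * diagonal d * Aᴴ) ≤ c := by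
  classical
  have h_one : ∑ g : Fin n → Fin m with StrictMono g,
      det (A.submatrix id g) * star (det (A.submatrix id g)) = 1 := by
    simpa [hA] using (det_mul_diagonal_mul_conjTranspose A 1).symm
  rw [det_mul_diagonal_mul_conjTranspose, ← mul_one c, ← h_one, Finset.mul_sum]
  gcongr with g hg
  · exact mul_star_self_nonneg _
  · exact hc g (Finset.mem_filter.mp hg).2

theorem det_one_add_mul_mul_conjTranspose_of_svd {n m : Type*} [Fintype n] [DecidableEq n]
    [Fintype m] [DecidableEq m] {U D : Matrix n n R} (hU : Uᴴ * U = 1) (V : Matrix m n R)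
    (K : Matrix m m R) :
    det (1 + U * D * Vᴴ * K * (U * D * Vᴴ)ᴴ) = det (1 + Dᴴ * D * (Vᴴ * K * V)) := by
  have h_conj : U * D * Vᴴ * K * (U * D * Vᴴ)ᴴ = U * (D * (Vᴴ * K * V) * Dᴴ * Uᴴ) := by
    simp only [conjTranspose_mul, conjTranspose_conjTranspose, Matrix.mul_assoc]
  rw [h_conj, det_one_add_mul_comm, Matrix.mul_assoc _ Uᴴ, hU, Matrix.mul_one, Matrix.mul_assoc,
    det_one_add_mul_comm, Matrix.mul_assoc, det_one_add_mul_comm, Matrix.mul_assoc]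

end CommRing

variable {𝕜 : Type*} [RCLike 𝕜]

section Fintype

variable {n : Type*} [Fintype n]

theorem trace_mul_conjTranspose_self {m : Type*} [Fintype m] (A : Matrix n m 𝕜) :
    trace (A * Aᴴ) = ∑ a, ∑ b, ((‖A a b‖ ^ 2 : ℝ) : 𝕜) := by
  simp [trace, mul_apply, RCLike.star_def, RCLike.mul_conj]

theorem sum_sum_norm_sq_eq_sum_sq_of_svd [DecidableEq n] {m : Type*} [Fintype m]
    {U : Matrix n n 𝕜} {V : Matrix m n 𝕜} (hU : Uᴴ * U = 1) (hV : Vᴴ * V = 1) (σ : n → ℝ) :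
    ∑ a, ∑ b, ‖(U * diagonal (fun i => (σ i : 𝕜)) * Vᴴ) a b‖ ^ 2 = ∑ i, σ i ^ 2 := by
  set D := diagonal fun i => (σ i : 𝕜)
  have h_gram : (U * D * Vᴴ) * (U * D * Vᴴ)ᴴ = U * (D * Dᴴ) * Uᴴ := by
    simp only [conjTranspose_mul, conjTranspose_conjTranspose, Matrix.mul_assoc]
    rw [← Matrix.mul_assoc Vᴴ, hV, Matrix.one_mul]
  have h_trace := trace_mul_conjTranspose_self (U * D * Vᴴ)
  rw [h_gram, trace_mul_comm, ← Matrix.mul_assoc, hU, Matrix.one_mul] at h_trace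
  simp only [D, diagonal_conjTranspose, diagonal_mul_diagonal, trace_diagonal, Pi.star_apply,
    RCLike.star_def, RCLike.conj_ofReal, ← sq] at h_trace
  exact_mod_cast h_trace.symm

variable [DecidableEq n]

theorem PosSemidef.one_le_det_one_add {Y : Matrix n n 𝕜} (hY : Y.PosSemidef) :
    1 ≤ det (1 + Y) := by
  have hY_sa : IsSelfAdjoint Y := hY.1
  have h_cfc : 1 + Y = cfc (fun x : ℝ => 1 + x) Y := by
    rw [cfc_add .., cfc_const_one .., cfc_id' ..]
  rw [h_cfc, hY.1.cfc_eq]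
  simp only [IsHermitian.cfc, det_map, det_diagonal]
  exact Finset.one_le_prod fun i _ => by simpa using hY.eigenvalues_nonneg i

theorem PosSemidef.exists_eq_conjTranspose_mul_self {B : Matrix n n 𝕜} (hB : B.PosSemidef) :
    ∃ R : Matrix n n 𝕜, B = Rᴴ * R := by
  open scoped MatrixOrder in
  exact CStarAlgebra.nonneg_iff_eq_star_mul_self.mp hB.nonneg

theorem PosDef.det_le_det_add {A B : Matrix n n 𝕜} (hA : A.PosDef) (hB : B.PosSemidef) :
    det A ≤ det (A + B) := by
  obtain ⟨R, rfl⟩ := hB.exists_eq_conjTranspose_mul_self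
  have h_factor : A + Rᴴ * R = A * (1 + A⁻¹ * Rᴴ * R) := by
    rw [mul_add, mul_one, ← mul_assoc, ← mul_assoc,
      mul_nonsing_inv _ (A.isUnit_iff_isUnit_det.mp hA.isUnit), one_mul]
  rw [h_factor, det_mul, det_one_add_mul_comm, ← mul_assoc]
  exact le_mul_of_one_le_right hA.det_pos.le
    (hA.inv.posSemidef.mul_mul_conjTranspose_same R).one_le_det_one_add

-- With `K = Rᴴ * R`, Sylvester's identity turns both sides into `det (1 + R * X * Rᴴ)`,
-- which is monotone in `X`.
theorem PosSemidef.det_one_add_mul_le {K D : Matrix n n 𝕜} (hK : K.PosSemidef)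
    (hD : D.PosSemidef) {t : ℝ} (hDt : (t • 1 - D).PosSemidef) :
    det (1 + D * K) ≤ det (1 + t • K) := by
  obtain ⟨R, rfl⟩ := hK.exists_eq_conjTranspose_mul_self
  have h_left : det (1 + D * (Rᴴ * R)) = det (1 + R * D * Rᴴ) := by
    rw [← mul_assoc, det_one_add_mul_comm, mul_assoc]
  have h_right : det (1 + t • (Rᴴ * R)) = det (1 + R * D * Rᴴ + R * (t • 1 - D) * Rᴴ) := by
    rw [add_assoc, ← add_mul, ← mul_add, add_sub_cancel, mul_smul_comm, mul_one, smul_mul_assoc,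
      ← smul_mul_assoc, det_one_add_mul_comm, mul_smul_comm]
  rw [h_left, h_right]
  exact (PosDef.one.add_posSemidef (hD.mul_mul_conjTranspose_same R)).det_le_det_add
    (hDt.mul_mul_conjTranspose_same R)

end Fintype

theorem PosSemidef.det_one_add_smul_conjTranspose_mul_mul_le {n m : ℕ}
    {K : Matrix (Fin m) (Fin m) 𝕜} (hK : K.PosSemidef) {V : Matrix (Fin m) (Fin n) 𝕜}
    (hV : Vᴴ * V = 1) {t : ℝ} (ht : 0 ≤ t) {μ : Fin m → ℝ} (hμ_anti : Antitone μ)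
    (hμ : ∃ e : Perm (Fin m), μ = hK.1.eigenvalues ∘ e) (h : n ≤ m) :
    det (1 + t • (Vᴴ * K * V)) ≤ ((∏ i, (1 + t * μ (Fin.castLE h i)) : ℝ) : 𝕜) := by
  obtain ⟨e, rfl⟩ := hμ
  set W : Matrix (Fin m) (Fin m) 𝕜 := (hK.1.eigenvectorUnitary : Matrix (Fin m) (Fin m) 𝕜)
  have hW : W * Wᴴ = 1 := by simp [W, ← star_eq_conjTranspose]
  have hK_eq : K = W * diagonal (fun j => (hK.1.eigenvalues j : 𝕜)) * Wᴴ := by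
    conv_lhs => rw [hK.1.spectral_theorem, Unitary.conjStarAlgAut_apply]
    rfl
  set A := Vᴴ * W
  have hA : A * Aᴴ = 1 := by
    rw [conjTranspose_mul, conjTranspose_conjTranspose, Matrix.mul_assoc, ← Matrix.mul_assoc W, hW,
      Matrix.one_mul, hV]
  have h_diag : 1 + t • (Vᴴ * K * V) =
      A * diagonal (fun j => ((1 + t * hK.1.eigenvalues j : ℝ) : 𝕜)) * Aᴴ := by
    have h_split : diagonal (fun j => ((1 + t * hK.1.eigenvalues j : ℝ) : 𝕜)) =
        1 + t • diagonal (fun j => (hK.1.eigenvalues j : 𝕜)) := by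
      ext i j
      rcases eq_or_ne i j with rfl | hij
      · simp [RCLike.real_smul_eq_coe_mul]
      · simp [hij]
    have h_compress : Vᴴ * K * V = A * diagonal (fun j => (hK.1.eigenvalues j : 𝕜)) * Aᴴ := by
      conv_lhs => rw [hK_eq]
      simp only [A, conjTranspose_mul, conjTranspose_conjTranspose, Matrix.mul_assoc]
    rw [h_split, Matrix.mul_add, Matrix.add_mul, Matrix.mul_one, hA, h_compress, Matrix.mul_smul,
      Matrix.smul_mul]
  rw [h_diag]
  refine det_mul_diagonal_mul_conjTranspose_le hA _ fun g hg => ?_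
  have h_anti : Antitone fun j => 1 + t * (hK.1.eigenvalues ∘ e) j :=
    fun a b hab => by simpa using mul_le_mul_of_nonneg_left (hμ_anti hab) ht
  have h_le := Fin.prod_comp_le_prod_castLE h_anti
    (fun j => by have := hK.eigenvalues_nonneg (e j); positivity)
    (e.symm.injective.comp hg.injective) h
  rw [← RCLike.ofReal_prod, RCLike.ofReal_le_ofReal]
  simpa using h_le

end Matrix

theorem det_one_add_SKSH_svd_bound_general (N M : ℕ) (hNM : N ≤ M)
    (S : Matrix (Fin N) (Fin M) ℂ) (U : Matrix (Fin N) (Fin N) ℂ)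
    (σ : Fin N → ℝ)
    (VS : Matrix (Fin M) (Fin N) ℂ)
    (hU1 : Uᴴ * U = 1) (hVS : VSᴴ * VS = 1)
    (hS : S = U * Matrix.diagonal (fun i => (σ i : ℂ)) * VSᴴ)
    (K : Matrix (Fin M) (Fin M) ℂ) (hK : K.PosSemidef)
    (μ : Fin M → ℝ) (hμmono : Antitone μ)
    (hμ : ∃ e : Equiv.Perm (Fin M), μ = hK.1.eigenvalues ∘ e) :
    (1 + S * K * Sᴴ).det =
        (1 + Matrix.diagonal (fun i => ((σ i : ℂ)) ^ 2) * (VSᴴ * K * VS)).det ∧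
      (1 + S * K * Sᴴ).det.re ≤
        ∏ i : Fin N, (1 + (∑ a, ∑ b, ‖S a b‖ ^ 2) * μ (Fin.castLE hNM i)) := by
  set t := ∑ a, ∑ b, ‖S a b‖ ^ 2
  have h_eq : (1 + S * K * Sᴴ).det =
      (1 + diagonal (fun i => (σ i : ℂ) ^ 2) * (VSᴴ * K * VS)).det := by
    rw [hS, det_one_add_mul_mul_conjTranspose_of_svd hU1, diagonal_conjTranspose,
      diagonal_mul_diagonal]
    simp [sq]
  have ht : t = ∑ i, σ i ^ 2 := by
    subst hS
    exact sum_sum_norm_sq_eq_sum_sq_of_svd hU1 hVS σ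
  have hσ_le (i : Fin N) : σ i ^ 2 ≤ t :=
    ht ▸ Finset.single_le_sum (fun j _ => sq_nonneg (σ j)) (Finset.mem_univ i)
  have hD : (diagonal fun i => (σ i : ℂ) ^ 2).PosSemidef :=
    posSemidef_diagonal_iff.mpr fun i => by exact_mod_cast sq_nonneg (σ i)
  have hDt : (t • 1 - diagonal fun i => (σ i : ℂ) ^ 2).PosSemidef := by
    rw [← diagonal_one, ← diagonal_smul, diagonal_sub, posSemidef_diagonal_iff]
    intro i
    simpa [Complex.real_smul] using Complex.real_le_real.mpr (hσ_le i)
  refine ⟨h_eq, ?_⟩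
  have h_le := (h_eq ▸ (hK.conjTranspose_mul_mul_same VS).det_one_add_mul_le hD hDt).trans
    (hK.det_one_add_smul_conjTranspose_mul_mul_le hVS (by positivity) hμmono hμ hNM)
  exact_mod_cast (Complex.le_def.mp h_le).1

/-- For `S = U Σ V_Sᴴ` (SVD, with `U` unitary, `Σ = diag(σ) ≥ 0`, and `V_S`
having orthonormal columns) and `K ⪰ 0`:
`det(I + S K Sᴴ) = det(I + Σ² V_Sᴴ K V_S) ≤ ∏ᵢ (1 + ‖S‖_F² λᵢ(K))`,
where `μ = λ(K)` lists the eigenvalues of `K` in decreasing order and the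
product is over the `N` largest ones.  The determinant of `I + S K Sᴴ` is real,
so the inequality is stated for its real part. -/
theorem det_one_add_SKSH_svd_bound (N M : ℕ) (hNM : N ≤ M)
    (S : Matrix (Fin N) (Fin M) ℂ) (U : Matrix (Fin N) (Fin N) ℂ)
    (σ : Fin N → ℝ) (hσ : ∀ i, 0 ≤ σ i)
    (VS : Matrix (Fin M) (Fin N) ℂ)
    (hU1 : Uᴴ * U = 1) (hU2 : U * Uᴴ = 1) (hVS : VSᴴ * VS = 1)
    (hS : S = U * Matrix.diagonal (fun i => (σ i : ℂ)) * VSᴴ)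
    (K : Matrix (Fin M) (Fin M) ℂ) (hK : K.PosSemidef)
    (μ : Fin M → ℝ) (hμmono : Antitone μ)
    (hμ : ∃ e : Equiv.Perm (Fin M), μ = hK.1.eigenvalues ∘ e) :
    (1 + S * K * Sᴴ).det =
        (1 + Matrix.diagonal (fun i => ((σ i : ℂ)) ^ 2) * (VSᴴ * K * VS)).det ∧
      (1 + S * K * Sᴴ).det.re ≤
        ∏ i : Fin N, (1 + (∑ a, ∑ b, ‖S a b‖ ^ 2) * μ (Fin.castLE hNM i)) :=
  det_one_add_SKSH_svd_bound_general N M hNM S U σ VS hU1 hVS hS K hK μ hμmono hμ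
end

section
/- BC achievability reduction (Lemma 1 decodability covers the outer bound): let M ≤ N_1+N_2, N_1, N_2 ≤ M, α_1, α_2 ∈ [0,1]. Define the power allocation map f_{d-A}: for each k ≠ j ∈ {1,2}, (A_k, A_k') is given by: if M = N_j then A_k = A_k' = d_k/M; if M > N_j and d_k < M − N_j α_j then A_k = (A_k' − α_j)^+ with A_k' = d_k/(M−N_j) when d_k < (M−N_j)α_j and A_k' = (d_k + N_j α_j)/M otherwise; if M > N_j and d_k ≥ M − N_j α_j then A_k' = 1 and A_k = (d_k − (M−N_j))/N_j. Then for every (d_1,d_2) in the outer bound region defined by d_k ≤ N_k, d_1+d_2 ≤ M, d_1/N_1 + d_2/M ≤ 1 + ((M−N_1)/M)α_1, d_1/M + d_2/N_2 ≤ 1 + ((M−N_2)/M)α_2, the resulting allocation satisfies 0 ≤ A_k ≤ A_k' ≤ 1, A_k ≥ A_k' − α_j, d_k = N_j A_k + (M−N_j)A_k', and the decodability conditions d_k/N_k ≤ 1 − A_j for k ≠ j ∈ {1,2}. -/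
open scoped Classical

/-- The power-allocation map `f_{d-A}` of the BC achievability analysis:
given the parameters `M`, `N_j`, `α_j` and the target DoF `d_k`, it returns
the pair `(A_k, A_k')` of power exponents. -/
noncomputable def fdA (M Nj αj dk : ℝ) : ℝ × ℝ :=
  if M = Nj then (dk / M, dk / M)
  else if dk < M - Nj * αj then
    if dk < (M - Nj) * αj then
      (max (dk / (M - Nj) - αj) 0, dk / (M - Nj))
    else
      (max ((dk + Nj * αj) / M - αj) 0, (dk + Nj * αj) / M)
  else ((dk - (M - Nj)) / Nj, 1)

/-!
In each regime of `f_{d-A}` the constraints on `(A, A')` are the defining inequalities of that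
regime. For decodability, `A_j` always equals `0`, `d_j / M - (M - N_k) α_k / M` or
`(d_j - (M - N_k)) / N_k`, and `d_k / N_k ≤ 1 - A_j` is then the bound `d_k ≤ N_k`, the weighted
outer bound, or the sum bound `d_1 + d_2 ≤ M`, respectively.
-/

theorem fdA_mem_allocation_region {M N α d : ℝ} (hN : 0 < N) (hNM : N ≤ M)
    (hα0 : 0 ≤ α) (hα1 : α ≤ 1) (hd0 : 0 ≤ d) (hdM : d ≤ M) :
    0 ≤ (fdA M N α d).1 ∧ (fdA M N α d).1 ≤ (fdA M N α d).2 ∧ (fdA M N α d).2 ≤ 1 ∧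
      (fdA M N α d).2 - α ≤ (fdA M N α d).1 ∧
      d = N * (fdA M N α d).1 + (M - N) * (fdA M N α d).2 := by
  have hM : 0 < M := hN.trans_le hNM
  unfold fdA
  split_ifs with hMN hsat hlow
  · subst hMN
    refine ⟨by positivity, le_rfl, div_le_one_of_le₀ hdM hM.le, by linarith, ?_⟩
    field_simp
    ring
  · have hgap : 0 < M - N := sub_pos.2 (lt_of_le_of_ne hNM (Ne.symm hMN))
    have hA' : d / (M - N) ≤ α := (div_le_iff₀ hgap).2 (by linarith)
    refine ⟨le_max_right _ _, max_le (by linarith) (by positivity),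
      (div_le_one hgap).2 (by nlinarith), le_max_left _ _, ?_⟩
    rw [max_eq_right (by linarith)]
    field_simp
    ring
  · have hA' : α ≤ (d + N * α) / M := (le_div_iff₀ hM).2 (by linarith)
    rw [max_eq_left (by linarith)]
    refine ⟨by linarith, by linarith, (div_le_one hM).2 (by linarith), le_rfl, ?_⟩
    field_simp
    ring
  · have hsat' : M - N * α ≤ d := not_lt.1 hsat
    refine ⟨div_nonneg (by nlinarith) hN.le, (div_le_one hN).2 (by linarith), le_rfl,
      ?_, ?_⟩
    · rw [sub_le_iff_le_add, div_add' _ _ _ hN.ne', le_div_iff₀ hN]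
      nlinarith
    · field_simp
      ring

theorem fdA_fst_eq_zero_or {M N α d : ℝ} (hN : 0 < N) (hNM : N ≤ M) :
    (fdA M N α d).1 = 0 ∨ (fdA M N α d).1 = d / M - (M - N) / M * α ∨
      (fdA M N α d).1 = (d - (M - N)) / N := by
  have hM : 0 < M := hN.trans_le hNM
  unfold fdA
  split_ifs with hMN hsat hlow
  · subst hMN
    simp
  · have hgap : 0 < M - N := sub_pos.2 (lt_of_le_of_ne hNM (Ne.symm hMN))
    have hA' : d / (M - N) < α := (div_lt_iff₀ hgap).2 (by linarith)
    exact .inl (max_eq_right (by linarith))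
  · have hA : (d + N * α) / M - α = d / M - (M - N) / M * α := by
      field_simp
      ring
    rcases max_choice ((d + N * α) / M - α) 0 with h | h
    · exact .inr (.inl (h.trans hA))
    · exact .inl h
  · exact .inr (.inr rfl)

theorem div_le_one_sub_fdA_fst {M N α dj dk : ℝ} (hN : 0 < N) (hNM : N ≤ M)
    (hdkN : dk ≤ N) (hsum : dk + dj ≤ M)
    (hmix : dk / N + dj / M ≤ 1 + (M - N) / M * α) :
    dk / N ≤ 1 - (fdA M N α dj).1 := by
  rcases fdA_fst_eq_zero_or (α := α) (d := dj) hN hNM with h | h | h <;> rw [h]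
  · simpa using (div_le_one hN).2 hdkN
  · linarith
  · have hslack : 1 - (dj - (M - N)) / N - dk / N = (M - dk - dj) / N := by
      field_simp
      ring
    have hnonneg : 0 ≤ (M - dk - dj) / N := div_nonneg (by linarith) hN.le
    linarith

theorem bc_outer_bound_maps_into_decodability_region_general
    (M N₁ N₂ : ℕ) (hN₁ : 0 < N₁) (hN₂ : 0 < N₂)
    (hN₁M : N₁ ≤ M) (hN₂M : N₂ ≤ M)
    (α₁ α₂ d₁ d₂ : ℝ)
    (hα₁0 : 0 ≤ α₁) (hα₁1 : α₁ ≤ 1) (hα₂0 : 0 ≤ α₂) (hα₂1 : α₂ ≤ 1)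
    (hd₁0 : 0 ≤ d₁) (hd₂0 : 0 ≤ d₂)
    (hb₁ : d₁ ≤ (N₁ : ℝ)) (hb₂ : d₂ ≤ (N₂ : ℝ)) (hb₃ : d₁ + d₂ ≤ (M : ℝ))
    (hb₄ : d₁ / N₁ + d₂ / M ≤ 1 + (((M : ℝ) - N₁) / M) * α₁)
    (hb₅ : d₁ / M + d₂ / N₂ ≤ 1 + (((M : ℝ) - N₂) / M) * α₂)
    (A₁ A₁' A₂ A₂' : ℝ)
    (hp₁ : (A₁, A₁') = fdA (M : ℝ) (N₂ : ℝ) α₂ d₁)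
    (hp₂ : (A₂, A₂') = fdA (M : ℝ) (N₁ : ℝ) α₁ d₂) :
    (0 ≤ A₁ ∧ A₁ ≤ A₁' ∧ A₁' ≤ 1 ∧ A₁' - α₂ ≤ A₁ ∧
      d₁ = (N₂ : ℝ) * A₁ + ((M : ℝ) - N₂) * A₁' ∧ d₁ / N₁ ≤ 1 - A₂) ∧
    (0 ≤ A₂ ∧ A₂ ≤ A₂' ∧ A₂' ≤ 1 ∧ A₂' - α₁ ≤ A₂ ∧
      d₂ = (N₁ : ℝ) * A₂ + ((M : ℝ) - N₁) * A₂' ∧ d₂ / N₂ ≤ 1 - A₁) := by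
  have hN₁R : (0 : ℝ) < N₁ := Nat.cast_pos.2 hN₁
  have hN₂R : (0 : ℝ) < N₂ := Nat.cast_pos.2 hN₂
  have hN₁MR : (N₁ : ℝ) ≤ M := Nat.cast_le.2 hN₁M
  have hN₂MR : (N₂ : ℝ) ≤ M := Nat.cast_le.2 hN₂M
  obtain ⟨rfl, rfl⟩ := Prod.ext_iff.1 hp₁
  obtain ⟨rfl, rfl⟩ := Prod.ext_iff.1 hp₂
  obtain ⟨hA₁, hA₁A₁', hA₁', hα₂A₁, hd₁⟩ :=
    fdA_mem_allocation_region hN₂R hN₂MR hα₂0 hα₂1 hd₁0 (hb₁.trans hN₁MR)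
  obtain ⟨hA₂, hA₂A₂', hA₂', hα₁A₂, hd₂⟩ :=
    fdA_mem_allocation_region hN₁R hN₁MR hα₁0 hα₁1 hd₂0 (hb₂.trans hN₂MR)
  exact ⟨⟨hA₁, hA₁A₁', hA₁', hα₂A₁, hd₁, div_le_one_sub_fdA_fst hN₁R hN₁MR hb₁ hb₃ hb₄⟩,
    ⟨hA₂, hA₂A₂', hA₂', hα₁A₂, hd₂,
      div_le_one_sub_fdA_fst hN₂R hN₂MR hb₂ (by rwa [add_comm]) (by rwa [add_comm])⟩⟩

/-- BC achievability reduction: for `N₁, N₂ ≤ M ≤ N₁ + N₂` and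
`α₁, α₂ ∈ [0,1]`, every point `(d₁, d₂)` of the outer-bound region is mapped
by `f_{d-A}` to a power allocation `(A_k, A_k')` (for `k ≠ j ∈ {1,2}`,
`(A₁,A₁') = f_{d-A}(M, N₂, α₂, d₁)` and `(A₂,A₂') = f_{d-A}(M, N₁, α₁, d₂)`)
satisfying `0 ≤ A_k ≤ A_k' ≤ 1`, `A_k ≥ A_k' − α_j`,
`d_k = N_j A_k + (M − N_j) A_k'`, and the decodability conditions
`d_k / N_k ≤ 1 − A_j`. -/
theorem bc_outer_bound_maps_into_decodability_region
    (M N₁ N₂ : ℕ) (hN₁ : 0 < N₁) (hN₂ : 0 < N₂)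
    (hN₁M : N₁ ≤ M) (hN₂M : N₂ ≤ M) (hM : M ≤ N₁ + N₂)
    (α₁ α₂ d₁ d₂ : ℝ)
    (hα₁0 : 0 ≤ α₁) (hα₁1 : α₁ ≤ 1) (hα₂0 : 0 ≤ α₂) (hα₂1 : α₂ ≤ 1)
    (hd₁0 : 0 ≤ d₁) (hd₂0 : 0 ≤ d₂)
    (hb₁ : d₁ ≤ (N₁ : ℝ)) (hb₂ : d₂ ≤ (N₂ : ℝ)) (hb₃ : d₁ + d₂ ≤ (M : ℝ))
    (hb₄ : d₁ / N₁ + d₂ / M ≤ 1 + (((M : ℝ) - N₁) / M) * α₁)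
    (hb₅ : d₁ / M + d₂ / N₂ ≤ 1 + (((M : ℝ) - N₂) / M) * α₂)
    (A₁ A₁' A₂ A₂' : ℝ)
    (hp₁ : (A₁, A₁') = fdA (M : ℝ) (N₂ : ℝ) α₂ d₁)
    (hp₂ : (A₂, A₂') = fdA (M : ℝ) (N₁ : ℝ) α₁ d₂) :
    (0 ≤ A₁ ∧ A₁ ≤ A₁' ∧ A₁' ≤ 1 ∧ A₁' - α₂ ≤ A₁ ∧
      d₁ = (N₂ : ℝ) * A₁ + ((M : ℝ) - N₂) * A₁' ∧ d₁ / N₁ ≤ 1 - A₂) ∧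
    (0 ≤ A₂ ∧ A₂ ≤ A₂' ∧ A₂' ≤ 1 ∧ A₂' - α₁ ≤ A₂ ∧
      d₂ = (N₁ : ℝ) * A₂ + ((M : ℝ) - N₁) * A₂' ∧ d₂ / N₂ ≤ 1 - A₁) :=
  bc_outer_bound_maps_into_decodability_region_general M N₁ N₂ hN₁ hN₂ hN₁M hN₂M α₁ α₂ d₁ d₂ hα₁0
    hα₁1 hα₂0 hα₂1 hd₁0 hd₂0 hb₁ hb₂ hb₃ hb₄ hb₅ A₁ A₁' A₂ A₂' hp₁ hp₂
end
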